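/- arXiv:2305.04912 — 2 statements merged into one kernel-verified Lean document; each statement's English description precedes it below -/
import Mathlib

section
/- Let v_1, ..., v_N ∈ R^d satisfy Σ_i v_i = 0 and ‖v_i‖ ≤ G for all i, and let m ≤ N. For any β < 1/e, with probability at least 1 - β over a uniformly random permutation π of [N], we have ‖Σ_{j=1}^m v_{π(j)}‖ ≤ 5G√(m·log(1/β)). -/
open scoped BigOperators
open scoped RealInnerProductSpace

lemma exp_le_add_exp_sq (x : ℝ) : Real.exp x ≤ x + Real.exp (x ^ 2) := by
  rcases le_or_gt |x| 1 with h | h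
  · have hb := Real.exp_bound h (n := 2) (by norm_num)
    have h1 : Real.exp x - (1 + x) ≤ |x| ^ 2 * (3 / (2 * 2)) := by
      have := (abs_le.mp hb).2
      simp [Finset.sum_range_succ] at this ⊢
      nlinarith [this]
    have h2 : x ^ 2 + 1 ≤ Real.exp (x ^ 2) := Real.add_one_le_exp _
    have h3 : |x| ^ 2 = x ^ 2 := sq_abs x
    nlinarith [h1, h2]
  · have hx2 : |x| ≤ x ^ 2 := by nlinarith [sq_abs x, abs_nonneg x]
    rcases le_or_gt 0 x with hx | hx
    · have : Real.exp x ≤ Real.exp (x ^ 2) := Real.exp_le_exp.mpr (le_trans (le_abs_self x) hx2)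
      linarith
    · have h1 : Real.exp x ≤ 1 := by
        have := Real.exp_le_exp.mpr (le_of_lt hx)
        simpa using this
      have h2 : x ^ 2 + 1 ≤ Real.exp (x ^ 2) := Real.add_one_le_exp _
      have h4 : -x ≤ |x| := neg_le_abs x
      nlinarith

lemma key_rec {α : Type*} [DecidableEq α] (h : Finset α → ℝ) (s : Finset α) (k : ℕ) :
    ((k + 1 : ℕ) : ℝ) * ∑ t ∈ s.powersetCard (k + 1), h t
      = ∑ a ∈ s, ∑ t ∈ (s.erase a).powersetCard k, h (insert a t) := by
  have step1 : ∀ a ∈ s, ∑ t ∈ (s.erase a).powersetCard k, h (insert a t)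
      = ∑ t ∈ (s.powersetCard (k + 1)).filter (fun t => a ∈ t), h t := by
    intro a ha
    refine Finset.sum_bij (fun t _ => insert a t) ?_ ?_ ?_ ?_
    · intro t ht
      rw [Finset.mem_powersetCard] at ht
      have hat : a ∉ t := fun h' => (Finset.mem_erase.mp (ht.1 h')).1 rfl
      refine Finset.mem_filter.mpr ⟨Finset.mem_powersetCard.mpr ⟨?_, ?_⟩, Finset.mem_insert_self _ _⟩
      · exact Finset.insert_subset ha (ht.1.trans (Finset.erase_subset _ _))
      · rw [Finset.card_insert_of_notMem hat, ht.2]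
    · intro t1 h1 t2 h2 heq
      rw [Finset.mem_powersetCard] at h1 h2
      have h1a : a ∉ t1 := fun h' => (Finset.mem_erase.mp (h1.1 h')).1 rfl
      have h2a : a ∉ t2 := fun h' => (Finset.mem_erase.mp (h2.1 h')).1 rfl
      have := congrArg (fun u : Finset α => u.erase a) heq
      simpa [Finset.erase_insert h1a, Finset.erase_insert h2a] using this
    · intro t' ht'
      obtain ⟨ht'm, hat'⟩ := Finset.mem_filter.mp ht'
      rw [Finset.mem_powersetCard] at ht'm
      refine ⟨t'.erase a, Finset.mem_powersetCard.mpr ⟨?_, ?_⟩, ?_⟩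
      · exact Finset.erase_subset_erase a ht'm.1
      · rw [Finset.card_erase_of_mem hat', ht'm.2]; rfl
      · exact Finset.insert_erase hat'
    · intro t ht; rfl
  rw [Finset.sum_congr rfl step1]
  have swap : ∑ a ∈ s, ∑ t ∈ (s.powersetCard (k + 1)).filter (fun t => a ∈ t), h t
      = ∑ t ∈ s.powersetCard (k + 1), ∑ a ∈ s, if a ∈ t then h t else 0 := by
    rw [Finset.sum_comm]
    exact Finset.sum_congr rfl fun a _ => (Finset.sum_filter _ _)
  rw [swap]
  rw [Finset.mul_sum]
  refine Finset.sum_congr rfl fun t ht => ?_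
  rw [Finset.mem_powersetCard] at ht
  have : ∑ a ∈ s, (if a ∈ t then h t else 0) = ∑ a ∈ s.filter (fun a => a ∈ t), h t :=
    (Finset.sum_filter _ _).symm
  rw [this]
  have hft : s.filter (fun a => a ∈ t) = t := by
    ext a; simp only [Finset.mem_filter]
    exact ⟨fun h => h.2, fun h => ⟨ht.1 h, h⟩⟩
  rw [hft, Finset.sum_const, ht.2, nsmul_eq_mul]

lemma swap_bound {E : Type*} [NormedAddCommGroup E] {α : Type*} [DecidableEq α] (v : α → E) (G : ℝ) (hG0 : 0 ≤ G)
    (hG : ∀ i, ‖v i‖ ≤ G) (s : Finset α) (k : ℕ) (x : E) {a b : α}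
    (ha : a ∈ s) (hb : b ∈ s) :
    ∑ t ∈ (s.erase a).powersetCard k, ‖x + v a + ∑ i ∈ t, v i‖
      ≤ (∑ t ∈ (s.erase b).powersetCard k, ‖x + v b + ∑ i ∈ t, v i‖)
        + ((s.erase a).powersetCard k).card * (2 * G) := by
  rcases eq_or_ne a b with rfl | hab
  · have : (0 : ℝ) ≤ ((s.erase a).powersetCard k).card * (2 * G) := by positivity
    linarith
  have σinj : Function.Injective (Equiv.swap a b) := (Equiv.swap a b).injective
  have hdouble : ∀ t : Finset α,
      Finset.image (⇑(Equiv.swap a b)) (Finset.image (⇑(Equiv.swap a b)) t) = t := by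
    intro t
    rw [Finset.image_image]
    have : ((Equiv.swap a b : α → α) ∘ (Equiv.swap a b : α → α)) = id := by
      funext i; simp [Equiv.swap_apply_self]
    rw [this, Finset.image_id]
  have hre : ∑ t ∈ (s.erase b).powersetCard k, ‖x + v b + ∑ i ∈ t, v i‖
      = ∑ t ∈ (s.erase a).powersetCard k, ‖x + v b + ∑ i ∈ t.image (Equiv.swap a b), v i‖ := by
    refine Finset.sum_nbij' (fun t => t.image (Equiv.swap a b)) (fun t => t.image (Equiv.swap a b))
      ?_ ?_ ?_ ?_ ?_
    · intro t ht
      rw [Finset.mem_powersetCard] at ht ⊢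
      refine ⟨?_, by rw [Finset.card_image_of_injective _ σinj, ht.2]⟩
      intro i hi
      obtain ⟨j, hj, rfl⟩ := Finset.mem_image.mp hi
      have hjs := ht.1 hj
      rw [Finset.mem_erase] at hjs ⊢
      rcases eq_or_ne j a with rfl | hja
      · simpa [Equiv.swap_apply_left] using ⟨hab.symm, hb⟩
      rcases eq_or_ne j b with rfl | hjb
      · exact absurd rfl hjs.1
      · rw [Equiv.swap_apply_of_ne_of_ne hja hjb]; exact ⟨hja, hjs.2⟩
    · intro t ht
      rw [Finset.mem_powersetCard] at ht ⊢
      refine ⟨?_, by rw [Finset.card_image_of_injective _ σinj, ht.2]⟩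
      intro i hi
      obtain ⟨j, hj, rfl⟩ := Finset.mem_image.mp hi
      have hjs := ht.1 hj
      rw [Finset.mem_erase] at hjs ⊢
      rcases eq_or_ne j b with rfl | hjb
      · simpa [Equiv.swap_apply_right] using ⟨hab, ha⟩
      rcases eq_or_ne j a with rfl | hja
      · exact absurd rfl hjs.1
      · rw [Equiv.swap_apply_of_ne_of_ne hja hjb]; exact ⟨hjb, hjs.2⟩
    · intro t ht; exact hdouble t
    · intro t ht; exact hdouble t
    · intro t ht; simp only [hdouble t]
  rw [hre]
  have pointwise : ∀ t ∈ (s.erase a).powersetCard k,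
      ‖x + v a + ∑ i ∈ t, v i‖ ≤ ‖x + v b + ∑ i ∈ t.image (Equiv.swap a b), v i‖ + 2 * G := by
    intro t ht
    rw [Finset.mem_powersetCard] at ht
    have hat : a ∉ t := fun h' => (Finset.mem_erase.mp (ht.1 h')).1 rfl
    have himg : ∑ i ∈ t.image (Equiv.swap a b), v i = ∑ i ∈ t, v (Equiv.swap a b i) := by
      rw [Finset.sum_image (fun i _ j _ hij => σinj hij)]
    rw [himg]
    by_cases hbt : b ∈ t
    · have h1 : ∑ i ∈ t, v (Equiv.swap a b i) = v a + ∑ i ∈ t.erase b, v i := by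
        rw [← Finset.add_sum_erase _ _ hbt, Equiv.swap_apply_right]
        congr 1
        refine Finset.sum_congr rfl fun i hi => ?_
        have hib : i ≠ b := (Finset.mem_erase.mp hi).1
        have hia : i ≠ a := fun h' => hat (h' ▸ (Finset.mem_erase.mp hi).2)
        rw [Equiv.swap_apply_of_ne_of_ne hia hib]
      have h2 : ∑ i ∈ t, v i = v b + ∑ i ∈ t.erase b, v i := by
        rw [Finset.add_sum_erase _ _ hbt]
      rw [h1, h2]
      have : x + v a + (v b + ∑ i ∈ t.erase b, v i)
          = x + v b + (v a + ∑ i ∈ t.erase b, v i) := by abel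
      rw [this]
      linarith
    · have h1 : ∑ i ∈ t, v (Equiv.swap a b i) = ∑ i ∈ t, v i := by
        refine Finset.sum_congr rfl fun i hi => ?_
        have hia : i ≠ a := fun h' => hat (h' ▸ hi)
        have hib : i ≠ b := fun h' => hbt (h' ▸ hi)
        rw [Equiv.swap_apply_of_ne_of_ne hia hib]
      rw [h1]
      have h2 : x + v a + ∑ i ∈ t, v i = (x + v b + ∑ i ∈ t, v i) + (v a - v b) := by abel
      rw [h2]
      have h3 : ‖v a - v b‖ ≤ 2 * G := by
        have := norm_sub_le (v a) (v b)
        have := hG a; have := hG b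
        linarith [norm_sub_le (v a) (v b)]
      exact le_trans (norm_add_le _ _) (by linarith)
  calc ∑ t ∈ (s.erase a).powersetCard k, ‖x + v a + ∑ i ∈ t, v i‖
      ≤ ∑ t ∈ (s.erase a).powersetCard k,
          (‖x + v b + ∑ i ∈ t.image (Equiv.swap a b), v i‖ + 2 * G) :=
        Finset.sum_le_sum pointwise
    _ = (∑ t ∈ (s.erase a).powersetCard k, ‖x + v b + ∑ i ∈ t.image (Equiv.swap a b), v i‖)
        + ((s.erase a).powersetCard k).card * (2 * G) := by
        rw [Finset.sum_add_distrib, Finset.sum_const, nsmul_eq_mul]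

lemma mgf_bound {E : Type*} [NormedAddCommGroup E] {α : Type*} [DecidableEq α]
    (v : α → E) (G l : ℝ) (hG0 : 0 ≤ G) (hG : ∀ i, ‖v i‖ ≤ G) :
    ∀ (k : ℕ) (s : Finset α) (x : E), k ≤ s.card →
    ∑ t ∈ s.powersetCard k, Real.exp (l * ‖x + ∑ i ∈ t, v i‖)
      ≤ (s.card.choose k : ℝ) *
        Real.exp (l * ((∑ t ∈ s.powersetCard k, ‖x + ∑ i ∈ t, v i‖) / (s.card.choose k))
          + k * (4 * G ^ 2 * l ^ 2)) := by
  intro k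
  induction k with
  | zero =>
    intro s x _
    simp [Finset.powersetCard_zero]
  | succ k IH =>
    intro s x hk1
    set n := s.card with hn
    have hn1 : 1 ≤ n := le_trans (Nat.succ_le_succ (Nat.zero_le k)) hk1
    set n' := n - 1 with hn'
    have hnn' : n = n' + 1 := (Nat.succ_pred_eq_of_pos hn1).symm
    have hk' : k ≤ n' := by omega
    set C' : ℝ := (n'.choose k : ℝ) with hC'def
    have hC' : (0 : ℝ) < C' := by
      rw [hC'def]; exact_mod_cast Nat.choose_pos hk'
    set C1 : ℝ := (n.choose (k + 1) : ℝ) with hC1def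
    have hC1 : (0 : ℝ) < C1 := by
      rw [hC1def]; exact_mod_cast Nat.choose_pos hk1
    have hcard_erase : ∀ a ∈ s, (s.erase a).card = n' := by
      intro a ha; rw [Finset.card_erase_of_mem ha]
    -- the per-element conditional means
    set μ : α → ℝ :=
      fun a => (∑ t ∈ (s.erase a).powersetCard k, ‖x + v a + ∑ i ∈ t, v i‖) / C' with hμdef
    -- rewrite inner sums over insert
    have hins : ∀ a ∈ s, ∀ g : E → ℝ, ∑ t ∈ (s.erase a).powersetCard k,
        g (x + ∑ i ∈ insert a t, v i) = ∑ t ∈ (s.erase a).powersetCard k,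
        g (x + v a + ∑ i ∈ t, v i) := by
      intro a ha g
      refine Finset.sum_congr rfl fun t ht => ?_
      rw [Finset.mem_powersetCard] at ht
      have hat : a ∉ t := fun h' => (Finset.mem_erase.mp (ht.1 h')).1 rfl
      rw [Finset.sum_insert hat, ← add_assoc]
    -- swap bound : μ a ≤ μ b + 2G
    have hμswap : ∀ a ∈ s, ∀ b ∈ s, μ a ≤ μ b + 2 * G := by
      intro a ha b hb
      have hsb := swap_bound v G hG0 hG s k x ha hb
      have hcard : (((s.erase a).powersetCard k).card : ℝ) = C' := by
        rw [Finset.card_powersetCard, hcard_erase a ha]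
      rw [hcard] at hsb
      have : μ a * C' ≤ (μ b + 2 * G) * C' := by
        rw [hμdef]
        simp only []
        rw [div_mul_cancel₀ _ hC'.ne', add_mul, div_mul_cancel₀ _ hC'.ne']
        linarith
      exact le_of_mul_le_mul_right this hC'
    set μbar : ℝ := (∑ a ∈ s, μ a) / n with hμbar
    have hnR : (0 : ℝ) < (n : ℝ) := by exact_mod_cast hn1
    have hsummu : (n : ℝ) * μbar = ∑ a ∈ s, μ a := by
      rw [hμbar, mul_div_cancel₀ _ hnR.ne']
    have hμdev : ∀ a ∈ s, |μ a - μbar| ≤ 2 * G := by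
      intro a ha
      have h1 : ∑ b ∈ s, (μ a - μ b) ≤ ∑ b ∈ s, (2 * G) :=
        Finset.sum_le_sum fun b hb => by linarith [hμswap a ha b hb]
      have h2 : ∑ b ∈ s, (2 * G) ≤ ∑ b ∈ s, (μ a - μ b) + (2:ℝ) * (∑ b ∈ s, (2*G)) := by
        have : ∀ b ∈ s, -(2*G) ≤ μ a - μ b := fun b hb => by linarith [hμswap b hb a ha]
        have h3 : ∑ b ∈ s, (-(2*G)) ≤ ∑ b ∈ s, (μ a - μ b) := Finset.sum_le_sum this
        simp only [Finset.sum_const, nsmul_eq_mul] at h3 ⊢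
        linarith
      have hconst : ∑ b ∈ s, (2 * G : ℝ) = (n : ℝ) * (2 * G) := by
        rw [Finset.sum_const, nsmul_eq_mul]
      have hdiff : ∑ b ∈ s, (μ a - μ b) = (n : ℝ) * (μ a - μbar) := by
        rw [Finset.sum_sub_distrib, Finset.sum_const, nsmul_eq_mul, ← hsummu]
        ring
      rw [abs_le]
      constructor
      · have := h2; rw [hconst, hdiff] at this; nlinarith
      · have := h1; rw [hconst, hdiff] at this; nlinarith
    -- sum of exponentials of the means
    have hexpsum : ∑ a ∈ s, Real.exp (l * μ a)
        ≤ (n : ℝ) * Real.exp (l * μbar + 4 * G ^ 2 * l ^ 2) := by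
      have h1 : ∀ a ∈ s, Real.exp (l * μ a)
          = Real.exp (l * μbar) * Real.exp (l * (μ a - μbar)) := by
        intro a ha; rw [← Real.exp_add]; congr 1; ring
      rw [Finset.sum_congr rfl h1, ← Finset.mul_sum]
      have h2 : ∑ a ∈ s, Real.exp (l * (μ a - μbar))
          ≤ ∑ a ∈ s, (l * (μ a - μbar) + Real.exp ((l * (μ a - μbar)) ^ 2)) :=
        Finset.sum_le_sum fun a _ => exp_le_add_exp_sq _
      have h3 : ∑ a ∈ s, (l * (μ a - μbar)) = 0 := by
        rw [← Finset.mul_sum, Finset.sum_sub_distrib, Finset.sum_const, nsmul_eq_mul,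
          ← hsummu]
        ring
      have h4 : ∑ a ∈ s, Real.exp ((l * (μ a - μbar)) ^ 2)
          ≤ ∑ a ∈ s, Real.exp (4 * G ^ 2 * l ^ 2) := by
        refine Finset.sum_le_sum fun a ha => Real.exp_le_exp.mpr ?_
        have := hμdev a ha
        have habs : (μ a - μbar) ^ 2 ≤ (2 * G) ^ 2 := sq_le_sq' (by linarith [abs_le.mp this]) (abs_le.mp this).2
        nlinarith [sq_nonneg l]
      have h5 : ∑ a ∈ s, Real.exp (4 * G ^ 2 * l ^ 2) = (n:ℝ) * Real.exp (4 * G^2 * l^2) := by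
        rw [Finset.sum_const, nsmul_eq_mul]
      rw [Finset.sum_add_distrib, h3] at h2
      have h6 : ∑ a ∈ s, Real.exp (l * (μ a - μbar)) ≤ (n:ℝ) * Real.exp (4*G^2*l^2) := by
        rw [h5] at h4; linarith
      calc Real.exp (l * μbar) * ∑ a ∈ s, Real.exp (l * (μ a - μbar))
          ≤ Real.exp (l * μbar) * ((n:ℝ) * Real.exp (4*G^2*l^2)) := by
            exact mul_le_mul_of_nonneg_left h6 (Real.exp_nonneg _)
        _ = (n : ℝ) * Real.exp (l * μbar + 4 * G^2 * l^2) := by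
            rw [Real.exp_add]; ring
    -- apply recursion + IH
    have hrec := key_rec (fun t => Real.exp (l * ‖x + ∑ i ∈ t, v i‖)) s k
    have hIHsum : ∑ a ∈ s, ∑ t ∈ (s.erase a).powersetCard k,
        Real.exp (l * ‖x + v a + ∑ i ∈ t, v i‖)
        ≤ ∑ a ∈ s, C' * Real.exp (l * μ a + k * (4 * G ^ 2 * l ^ 2)) := by
      refine Finset.sum_le_sum fun a ha => ?_
      have := IH (s.erase a) (x + v a) (by rw [hcard_erase a ha]; exact hk')
      rw [hcard_erase a ha] at this
      rw [hμdef]; simp only []; rw [hC'def]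
      exact this
    have hmain : ((k + 1 : ℕ) : ℝ) * ∑ t ∈ s.powersetCard (k+1), Real.exp (l * ‖x + ∑ i ∈ t, v i‖)
        ≤ ((k + 1 : ℕ):ℝ) * (C1 * Real.exp (l * μbar + ((k+1 : ℕ):ℝ) * (4 * G^2 * l^2))) := by
      rw [hrec]
      have e2 : ∑ a ∈ s, ∑ t ∈ (s.erase a).powersetCard k,
          Real.exp (l * ‖x + ∑ i ∈ insert a t, v i‖)
          = ∑ a ∈ s, ∑ t ∈ (s.erase a).powersetCard k,
          Real.exp (l * ‖x + v a + ∑ i ∈ t, v i‖) :=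
        Finset.sum_congr rfl fun a ha => hins a ha (fun y => Real.exp (l * ‖y‖))
      rw [e2]
      have e3 : ∑ a ∈ s, C' * Real.exp (l * μ a + k * (4 * G ^ 2 * l ^ 2))
          = C' * Real.exp ((k:ℝ) * (4*G^2*l^2)) * ∑ a ∈ s, Real.exp (l * μ a) := by
        rw [Finset.mul_sum]
        refine Finset.sum_congr rfl fun a _ => ?_
        rw [Real.exp_add]; ring
      have e4 : (n : ℝ) * C' = ((k:ℝ)+1) * C1 := by
        have := Nat.add_one_mul_choose_eq n' k
        have hcast : ((n' + 1 : ℕ) : ℝ) * (n'.choose k : ℝ)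
            = ((n'+1).choose (k+1) : ℝ) * ((k+1 : ℕ) : ℝ) := by exact_mod_cast this
        rw [hnn']
        push_cast at hcast ⊢
        rw [hC'def, hC1def, hnn']
        push_cast
        linarith [hcast]
      calc ∑ a ∈ s, ∑ t ∈ (s.erase a).powersetCard k,
            Real.exp (l * ‖x + v a + ∑ i ∈ t, v i‖)
          ≤ ∑ a ∈ s, C' * Real.exp (l * μ a + k * (4 * G ^ 2 * l ^ 2)) := hIHsum
        _ = C' * Real.exp ((k:ℝ) * (4*G^2*l^2)) * ∑ a ∈ s, Real.exp (l * μ a) := e3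
        _ ≤ C' * Real.exp ((k:ℝ) * (4*G^2*l^2)) * ((n:ℝ) * Real.exp (l * μbar + 4*G^2*l^2)) := by
            refine mul_le_mul_of_nonneg_left hexpsum ?_
            positivity
        _ = ((k + 1 : ℕ):ℝ) * (C1 * Real.exp (l * μbar + ((k+1 : ℕ):ℝ) * (4 * G^2 * l^2))) := by
            have e8 : Real.exp (l * μbar + ((k+1 : ℕ):ℝ) * (4*G^2*l^2))
                = Real.exp ((k:ℝ)*(4*G^2*l^2)) * Real.exp (l*μbar + 4*G^2*l^2) := by
              rw [← Real.exp_add]; congr 1; push_cast; ring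
            rw [e8]
            push_cast
            linear_combination (Real.exp ((k:ℝ)*(4*G^2*l^2)) * Real.exp (l*μbar + 4*G^2*l^2)) * e4
    -- identify μbar with the (k+1)-mean
    have hQ : μbar = (∑ t ∈ s.powersetCard (k+1), ‖x + ∑ i ∈ t, v i‖) / C1 := by
      have hrec2 := key_rec (fun t => ‖x + ∑ i ∈ t, v i‖) s k
      have e2 : ∑ a ∈ s, ∑ t ∈ (s.erase a).powersetCard k, ‖x + ∑ i ∈ insert a t, v i‖
          = ∑ a ∈ s, ∑ t ∈ (s.erase a).powersetCard k, ‖x + v a + ∑ i ∈ t, v i‖ :=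
        Finset.sum_congr rfl fun a ha => hins a ha (fun y => ‖y‖)
      rw [e2] at hrec2
      have e5 : ∑ a ∈ s, ∑ t ∈ (s.erase a).powersetCard k, ‖x + v a + ∑ i ∈ t, v i‖
          = C' * ∑ a ∈ s, μ a := by
        rw [Finset.mul_sum]
        refine Finset.sum_congr rfl fun a ha => ?_
        rw [hμdef]
        simp only []
        rw [mul_comm, div_mul_cancel₀ _ hC'.ne']
      rw [e5] at hrec2
      have e4 : (n : ℝ) * C' = ((k:ℝ)+1) * C1 := by
        have := Nat.add_one_mul_choose_eq n' k
        have hcast : ((n' + 1 : ℕ) : ℝ) * (n'.choose k : ℝ)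
            = ((n'+1).choose (k+1) : ℝ) * ((k+1 : ℕ) : ℝ) := by exact_mod_cast this
        rw [hnn']
        push_cast at hcast ⊢
        rw [hC'def, hC1def, hnn']
        push_cast
        linarith [hcast]
      set Q := ∑ t ∈ s.powersetCard (k+1), ‖x + ∑ i ∈ t, v i‖
      have e6 : ((k+1 : ℕ) : ℝ) = (k:ℝ) + 1 := by push_cast; ring
      rw [e6] at hrec2
      -- hrec2 : (k+1) * Q = C' * Σ μ ; hsummu : n μbar = Σ μ
      rw [eq_div_iff hC1.ne']
      have hk1R : (0:ℝ) < (k:ℝ) + 1 := by positivity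
      have : ((k:ℝ)+1) * (μbar * C1) = ((k:ℝ)+1) * Q := by
        calc ((k:ℝ)+1) * (μbar * C1) = μbar * (((k:ℝ)+1) * C1) := by ring
          _ = μbar * ((n:ℝ) * C') := by rw [e4]
          _ = ((n:ℝ) * μbar) * C' := by ring
          _ = (∑ a ∈ s, μ a) * C' := by rw [hsummu]
          _ = ((k:ℝ)+1) * Q := by rw [hrec2]; ring
      exact mul_left_cancel₀ hk1R.ne' this
    have hk1R : (0:ℝ) < ((k + 1 : ℕ):ℝ) := by positivity
    have hfin := le_of_mul_le_mul_left (hmain) hk1R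
    rw [hQ] at hfin
    exact hfin

lemma sq_bound {E : Type*} [NormedAddCommGroup E] [InnerProductSpace ℝ E]
    {α : Type*} [DecidableEq α]
    (v : α → E) (G : ℝ) (hG0 : 0 ≤ G) (hG : ∀ i, ‖v i‖ ≤ G) :
    ∀ (k : ℕ) (s : Finset α) (x : E), k ≤ s.card →
    ∑ t ∈ s.powersetCard k, ‖x + ∑ i ∈ t, v i‖ ^ 2
      ≤ (s.card.choose k : ℝ) *
        (‖x + ((k : ℝ) / (s.card : ℝ)) • ∑ i ∈ s, v i‖ ^ 2 + k * G ^ 2) := by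
  intro k
  induction k with
  | zero =>
    intro s x _
    simp [Finset.powersetCard_zero, zero_smul]
  | succ k IH =>
    intro s x hk1
    set n := s.card with hn
    have hn1 : 1 ≤ n := le_trans (Nat.succ_le_succ (Nat.zero_le k)) hk1
    set n' := n - 1 with hn'
    have hnn' : n = n' + 1 := (Nat.succ_pred_eq_of_pos hn1).symm
    have hk' : k ≤ n' := by omega
    have hnR : (0 : ℝ) < (n : ℝ) := by exact_mod_cast hn1
    set C' : ℝ := (n'.choose k : ℝ) with hC'def
    set C1 : ℝ := (n.choose (k + 1) : ℝ) with hC1def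
    have hC1 : (0 : ℝ) < C1 := by rw [hC1def]; exact_mod_cast Nat.choose_pos hk1
    have hC'0 : (0 : ℝ) ≤ C' := by rw [hC'def]; positivity
    have hcard_erase : ∀ a ∈ s, (s.erase a).card = n' := by
      intro a ha; rw [Finset.card_erase_of_mem ha]
    set V : E := ∑ i ∈ s, v i with hV
    set r : ℝ := (k : ℝ) / (n' : ℝ) with hr
    have hr0 : 0 ≤ r := by rw [hr]; positivity
    have hr1 : r ≤ 1 := by
      rw [hr]
      rcases Nat.eq_zero_or_pos n' with h0 | hpos
      · rw [h0]; simp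
      · have : (0:ℝ) < (n' : ℝ) := by exact_mod_cast hpos
        rw [div_le_one this]
        exact_mod_cast hk'
    set c : ℝ := 1 - r with hc
    have hc0 : 0 ≤ c := by rw [hc]; linarith
    have hc1 : c ≤ 1 := by rw [hc]; linarith
    set z : E := x + r • V with hz
    set w : E := x + (((k:ℝ) + 1) / (n : ℝ)) • V with hw
    have hwz : w = z + (c / n) • V := by
      rw [hw, hz, add_assoc, ← add_smul]
      congr 2
      rcases Nat.eq_zero_or_pos n' with h0 | hpos
      · have hk0 : k = 0 := by omega
        have hn1' : n = 1 := by omega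
        rw [hr, hc, hr, h0, hk0, hn1']
        norm_num
      · have hn'R : (0:ℝ) < (n' : ℝ) := by exact_mod_cast hpos
        have hnn'R : (n : ℝ) = (n' : ℝ) + 1 := by rw [hnn']; push_cast; ring
        rw [hr, hc, hr, hnn'R]
        field_simp
        ring
    clear_value n n' C' C1 V r c z w
    -- key algebraic inequality
    have key : ∑ a ∈ s, ‖z + c • v a‖ ^ 2 ≤ (n : ℝ) * (‖w‖ ^ 2 + G ^ 2) := by
      have e1 : ∀ a ∈ s, ‖z + c • v a‖ ^ 2
          = ‖z‖ ^ 2 + 2 * (c * ⟪z, v a⟫) + c ^ 2 * ‖v a‖ ^ 2 := by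
        intro a _
        rw [norm_add_sq_real, real_inner_smul_right, norm_smul]
        rw [mul_pow, Real.norm_eq_abs, sq_abs]
      rw [Finset.sum_congr rfl e1]
      rw [Finset.sum_add_distrib, Finset.sum_add_distrib, Finset.sum_const, nsmul_eq_mul]
      have e2 : ∑ a ∈ s, 2 * (c * ⟪z, v a⟫) = 2 * c * ⟪z, V⟫ := by
        rw [hV, inner_sum, Finset.mul_sum]
        refine Finset.sum_congr rfl fun a _ => by ring
      rw [e2]
      have e3 : ∑ a ∈ s, c ^ 2 * ‖v a‖ ^ 2 ≤ (n : ℝ) * G ^ 2 := by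
        have : ∀ a ∈ s, c ^ 2 * ‖v a‖ ^ 2 ≤ G ^ 2 := by
          intro a _
          have h1 : ‖v a‖ ^ 2 ≤ G ^ 2 := by nlinarith [hG a, norm_nonneg (v a)]
          have h2 : c ^ 2 ≤ 1 := by nlinarith
          calc c ^ 2 * ‖v a‖ ^ 2 ≤ 1 * ‖v a‖ ^ 2 :=
                mul_le_mul_of_nonneg_right h2 (sq_nonneg _)
            _ = ‖v a‖ ^ 2 := one_mul _
            _ ≤ G ^ 2 := h1
        calc ∑ a ∈ s, c ^ 2 * ‖v a‖ ^ 2 ≤ ∑ a ∈ s, G ^ 2 := Finset.sum_le_sum this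
          _ = (n : ℝ) * G ^ 2 := by rw [Finset.sum_const, nsmul_eq_mul, hn]
      have e4 : (n : ℝ) * ‖w‖ ^ 2 = (n:ℝ) * ‖z‖ ^ 2 + 2 * c * ⟪z, V⟫ + (c^2 / n) * ‖V‖^2 := by
        rw [hwz, norm_add_sq_real, real_inner_smul_right, norm_smul]
        rw [mul_pow, Real.norm_eq_abs, sq_abs]
        field_simp
      have e5 : 0 ≤ (c^2 / n) * ‖V‖^2 := by positivity
      rw [← hn]
      linarith [e3, e4, e5]
    -- recursion + IH
    have hins : ∀ a ∈ s, ∑ t ∈ (s.erase a).powersetCard k, ‖x + ∑ i ∈ insert a t, v i‖ ^ 2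
        = ∑ t ∈ (s.erase a).powersetCard k, ‖x + v a + ∑ i ∈ t, v i‖ ^ 2 := by
      intro a ha
      refine Finset.sum_congr rfl fun t ht => ?_
      rw [Finset.mem_powersetCard] at ht
      have hat : a ∉ t := fun h' => (Finset.mem_erase.mp (ht.1 h')).1 rfl
      rw [Finset.sum_insert hat, ← add_assoc]
    have hIHa : ∀ a ∈ s, ∑ t ∈ (s.erase a).powersetCard k, ‖x + v a + ∑ i ∈ t, v i‖ ^ 2
        ≤ C' * (‖z + c • v a‖ ^ 2 + k * G ^ 2) := by
      intro a ha
      have := IH (s.erase a) (x + v a) (by rw [hcard_erase a ha]; exact hk')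
      rw [hcard_erase a ha] at this
      have hV' : ∑ i ∈ s.erase a, v i = V - v a := by
        rw [hV, eq_sub_iff_add_eq, Finset.sum_erase_add _ _ ha]
      rw [hV'] at this
      have hzz : x + v a + ((k:ℝ) / (n' : ℝ)) • (V - v a) = z + c • v a := by
        rw [hz, hc, ← hr, smul_sub, sub_smul, one_smul]
        abel
      rw [hzz] at this
      rw [hC'def]
      exact this
    have hrec := key_rec (fun t => ‖x + ∑ i ∈ t, v i‖ ^ 2) s k
    have e4 : (n : ℝ) * C' = ((k:ℝ)+1) * C1 := by
      have := Nat.add_one_mul_choose_eq n' k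
      have hcast : ((n' + 1 : ℕ) : ℝ) * (n'.choose k : ℝ)
          = ((n'+1).choose (k+1) : ℝ) * ((k+1 : ℕ) : ℝ) := by exact_mod_cast this
      rw [hnn']
      push_cast at hcast ⊢
      rw [hC'def, hC1def, hnn']
      push_cast
      linarith [hcast]
    have hk1R : (0:ℝ) < ((k+1 : ℕ) : ℝ) := by positivity
    have hmain : ((k+1 : ℕ) : ℝ) * ∑ t ∈ s.powersetCard (k+1), ‖x + ∑ i ∈ t, v i‖ ^ 2
        ≤ ((k+1 : ℕ) : ℝ) * (C1 * (‖w‖ ^ 2 + ((k:ℝ)+1) * G ^ 2)) := by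
      rw [hrec]
      calc ∑ a ∈ s, ∑ t ∈ (s.erase a).powersetCard k, ‖x + ∑ i ∈ insert a t, v i‖ ^ 2
          = ∑ a ∈ s, ∑ t ∈ (s.erase a).powersetCard k, ‖x + v a + ∑ i ∈ t, v i‖ ^ 2 :=
            Finset.sum_congr rfl hins
        _ ≤ ∑ a ∈ s, C' * (‖z + c • v a‖ ^ 2 + k * G ^ 2) := Finset.sum_le_sum hIHa
        _ = C' * (∑ a ∈ s, ‖z + c • v a‖ ^ 2) + C' * ((n:ℝ) * ((k:ℝ) * G ^ 2)) := by
            rw [← Finset.mul_sum, Finset.sum_add_distrib, Finset.sum_const, nsmul_eq_mul, hn]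
            ring
        _ ≤ C' * ((n : ℝ) * (‖w‖ ^ 2 + G ^ 2)) + C' * ((n:ℝ) * ((k:ℝ) * G ^ 2)) := by
            have := mul_le_mul_of_nonneg_left key hC'0
            linarith
        _ = ((n:ℝ) * C') * (‖w‖ ^ 2 + ((k:ℝ)+1) * G ^ 2) := by ring
        _ = ((k+1 : ℕ) : ℝ) * (C1 * (‖w‖ ^ 2 + ((k:ℝ)+1) * G ^ 2)) := by
            rw [e4]; push_cast; ring
    have hfin := le_of_mul_le_mul_left hmain hk1R
    have e7 : ((k+1:ℕ):ℝ) = (k:ℝ) + 1 := by push_cast; ring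
    rw [e7, ← hw]
    exact hfin

lemma fib_const (m : ℕ) (J : Finset (Fin N)) (hJ : J.card = m)
    {A B : Finset (Fin N)}
    (hA : A ∈ (Finset.univ : Finset (Fin N)).powersetCard m)
    (hB : B ∈ (Finset.univ : Finset (Fin N)).powersetCard m) :
    (Finset.univ.filter (fun π : Equiv.Perm (Fin N) => J.image π = A)).card
      = (Finset.univ.filter (fun π : Equiv.Perm (Fin N) => J.image π = B)).card := by
  classical
  rw [Finset.mem_powersetCard] at hA hB
  have hcards : A.card = B.card := by rw [hA.2, hB.2]
  have hcomplcards : Aᶜ.card = Bᶜ.card := by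
    rw [Finset.card_compl, Finset.card_compl, hcards]
  let e1 : {i // i ∈ A} ≃ {i // i ∈ B} := Finset.equivOfCardEq hcards
  let e2 : {i : Fin N // ¬ i ∈ A} ≃ {i : Fin N // ¬ i ∈ B} :=
    ((Equiv.subtypeEquivRight (fun i => (Finset.mem_compl (s := A)).symm)).trans
      ((Finset.equivOfCardEq hcomplcards).trans
        (Equiv.subtypeEquivRight (fun i => Finset.mem_compl (s := B)))))
  let σ : Equiv.Perm (Fin N) :=
    ((Equiv.sumCompl (fun i => i ∈ A)).symm.trans
      ((e1.sumCongr e2).trans (Equiv.sumCompl (fun i => i ∈ B))))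
  have hσ : ∀ i ∈ A, σ i ∈ B := by
    intro i hi
    have h1 : (Equiv.sumCompl (fun i => i ∈ A)).symm i = Sum.inl ⟨i, hi⟩ :=
      Equiv.sumCompl_symm_apply_of_pos hi
    show ((Equiv.sumCompl (fun i => i ∈ A)).symm.trans
      ((e1.sumCongr e2).trans (Equiv.sumCompl (fun i => i ∈ B)))) i ∈ B
    rw [Equiv.trans_apply, h1, Equiv.trans_apply]
    simp only [Equiv.sumCongr_apply, Sum.map_inl, Equiv.sumCompl_apply_inl]
    exact (e1 ⟨i, hi⟩).2
  have himage : A.image σ = B := by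
    apply Finset.eq_of_subset_of_card_le
    · intro j hj
      obtain ⟨i, hi, rfl⟩ := Finset.mem_image.mp hj
      exact hσ i hi
    · rw [Finset.card_image_of_injective _ σ.injective, hcards]
  have himage' : B.image σ.symm = A := by
    rw [← himage, Finset.image_image]
    have : (⇑σ.symm ∘ ⇑σ) = id := by funext i; simp
    rw [this, Finset.image_id]
  refine Finset.card_bij' (fun π _ => π.trans σ) (fun π _ => π.trans σ.symm) ?_ ?_ ?_ ?_
  · intro π hπ
    rw [Finset.mem_filter] at hπ ⊢
    refine ⟨Finset.mem_univ _, ?_⟩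
    rw [Equiv.coe_trans, ← Finset.image_image, hπ.2, himage]
  · intro π hπ
    rw [Finset.mem_filter] at hπ ⊢
    refine ⟨Finset.mem_univ _, ?_⟩
    rw [Equiv.coe_trans, ← Finset.image_image, hπ.2, himage']
  · intro π _
    rw [Equiv.trans_assoc, Equiv.self_trans_symm, Equiv.trans_refl]
  · intro π _
    rw [Equiv.trans_assoc, Equiv.symm_trans_self, Equiv.trans_refl]

lemma J_card (m : ℕ) (hm : m ≤ N) :
    ((Finset.univ : Finset (Fin N)).filter (fun j : Fin N => (j : ℕ) < m)).card = m := by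
  classical
  have : (Finset.univ : Finset (Fin N)).filter (fun j : Fin N => (j : ℕ) < m)
      = Finset.map (Fin.castLEEmb hm) Finset.univ := by
    ext i
    simp only [Finset.mem_filter, Finset.mem_univ, true_and, Finset.mem_map]
    constructor
    · intro h
      exact ⟨⟨(i : ℕ), h⟩, by ext; simp⟩
    · rintro ⟨j, rfl⟩
      simpa using j.2
  rw [this, Finset.card_map, Finset.card_univ, Fintype.card_fin]


set_option maxHeartbeats 2000000 in
theorem stmt_3 {d N : ℕ} (hN : 2 ≤ N) (G β : ℝ) (v : Fin N → EuclideanSpace ℝ (Fin d))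
    (hsum : ∑ i, v i = 0) (hG : ∀ i, ‖v i‖ ≤ G) (m : ℕ) (hm : m ≤ N)
    (hβ0 : 0 < β) (hβ : β < 1 / Real.exp 1) :
    ((Finset.univ.filter (fun π : Equiv.Perm (Fin N) =>
        5 * G * Real.sqrt (m * Real.log (1 / β)) <
          ‖∑ j ∈ Finset.univ.filter (fun j : Fin N => (j : ℕ) < m), v (π j)‖)).card : ℝ)
      ≤ β * (Fintype.card (Equiv.Perm (Fin N))) := by
  classical
  have hG0 : 0 ≤ G := le_trans (norm_nonneg (v ⟨0, by omega⟩)) (hG _)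
  set L : ℝ := Real.log (1 / β) with hLdef
  have hexpβ : Real.exp 1 < 1 / β := by
    rw [lt_div_iff₀ hβ0]
    have h1 : β * Real.exp 1 < 1 := (lt_div_iff₀ (Real.exp_pos 1)).mp hβ
    nlinarith [h1]
  have hL1 : 1 < L := by
    rw [hLdef]
    exact (Real.lt_log_iff_exp_lt (by positivity)).mpr hexpβ
  set T : ℝ := 5 * G * Real.sqrt (m * L) with hTdef
  set J : Finset (Fin N) := Finset.univ.filter (fun j : Fin N => (j : ℕ) < m) with hJdef
  have hJcard : J.card = m := J_card m hm
  have hunivcard : (Finset.univ : Finset (Fin N)).card = N := by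
    rw [Finset.card_univ, Fintype.card_fin]
  have hΦmem : ∀ π : Equiv.Perm (Fin N),
      J.image π ∈ (Finset.univ : Finset (Fin N)).powersetCard m := by
    intro π
    rw [Finset.mem_powersetCard]
    exact ⟨Finset.subset_univ _, by rw [Finset.card_image_of_injective _ π.injective, hJcard]⟩
  have hcond : ∀ π : Equiv.Perm (Fin N),
      ‖∑ j ∈ J, v (π j)‖ = ‖∑ i ∈ J.image π, v i‖ := by
    intro π
    rw [Finset.sum_image (fun a _ b _ h => π.injective h)]
  -- STEP 1 : subset-level bound
  have hsubset : ((((Finset.univ : Finset (Fin N)).powersetCard m).filter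
        (fun A => T < ‖∑ i ∈ A, v i‖)).card : ℝ)
      ≤ β * (((Finset.univ : Finset (Fin N)).powersetCard m).card : ℝ) := by
    have hPcard : ((((Finset.univ : Finset (Fin N)).powersetCard m).card : ℝ))
        = (N.choose m : ℝ) := by
      rw [Finset.card_powersetCard, hunivcard]
    by_cases hT0 : ∀ A ∈ (Finset.univ : Finset (Fin N)).powersetCard m, ¬ (T < ‖∑ i ∈ A, v i‖)
    · rw [Finset.filter_false_of_mem hT0]
      simp only [Finset.card_empty, Nat.cast_zero]
      positivity
    -- hence G > 0 and m ≥ 1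
    push_neg at hT0
    obtain ⟨A₁, hA₁P, hA₁⟩ := hT0
    have hL0 : (0:ℝ) < L := by linarith
    have hGpos : 0 < G := by
      rcases lt_or_eq_of_le hG0 with h | h
      · exact h
      · exfalso
        have hv : ∀ i, v i = 0 := fun i => norm_le_zero_iff.mp (h ▸ hG i)
        have : ‖∑ i ∈ A₁, v i‖ = 0 := by
          rw [Finset.sum_congr rfl (fun i _ => hv i)]; simp
        rw [this] at hA₁
        have : (0:ℝ) ≤ T := by rw [hTdef, ← h]; positivity
        linarith
    have hm1 : 1 ≤ m := by
      by_contra h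
      have hm0 : m = 0 := by omega
      subst hm0
      have hA₁e : A₁ = ∅ := by
        rw [Finset.mem_powersetCard] at hA₁P
        exact Finset.card_eq_zero.mp hA₁P.2
      rw [hA₁e] at hA₁
      simp only [Finset.sum_empty, norm_zero] at hA₁
      have : T = 0 := by rw [hTdef]; simp
      linarith
    have hmR : (0:ℝ) < (m:ℝ) := by exact_mod_cast hm1
    -- second moment bound
    have hsq := sq_bound v G hG0 hG m Finset.univ 0 (by rw [hunivcard]; exact hm)
    rw [hunivcard] at hsq
    rw [hsum, smul_zero, add_zero, norm_zero] at hsq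
    simp only [zero_add] at hsq
    have hsq' : ∑ t ∈ (Finset.univ : Finset (Fin N)).powersetCard m, ‖∑ i ∈ t, v i‖ ^ 2
        ≤ (N.choose m : ℝ) * ((m:ℝ) * G ^ 2) := by
      have h02 : (0:ℝ) ^ 2 = 0 := by norm_num
      rw [h02, zero_add] at hsq
      exact hsq
    set CC : ℝ := (N.choose m : ℝ) with hCC
    have hCC0 : (0:ℝ) < CC := by rw [hCC]; exact_mod_cast Nat.choose_pos hm
    set Sn : ℝ := ∑ t ∈ (Finset.univ : Finset (Fin N)).powersetCard m, ‖∑ i ∈ t, v i‖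
      with hSn
    have hSn0 : 0 ≤ Sn := Finset.sum_nonneg fun A _ => norm_nonneg _
    have hCS : Sn ^ 2 ≤ (∑ t ∈ (Finset.univ : Finset (Fin N)).powersetCard m,
        ‖∑ i ∈ t, v i‖ ^ 2) * CC := by
      have := Finset.sum_mul_sq_le_sq_mul_sq
        ((Finset.univ : Finset (Fin N)).powersetCard m)
        (fun t => ‖∑ i ∈ t, v i‖) (fun _ => (1:ℝ))
      simp only [mul_one, one_pow, Finset.sum_const, nsmul_eq_mul] at this
      rw [hSn]
      calc (∑ t ∈ (Finset.univ : Finset (Fin N)).powersetCard m, ‖∑ i ∈ t, v i‖) ^ 2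
          ≤ (∑ t ∈ (Finset.univ : Finset (Fin N)).powersetCard m, ‖∑ i ∈ t, v i‖ ^ 2)
            * ((((Finset.univ : Finset (Fin N)).powersetCard m).card : ℝ)) := this
        _ = (∑ t ∈ (Finset.univ : Finset (Fin N)).powersetCard m, ‖∑ i ∈ t, v i‖ ^ 2) * CC := by
            rw [hPcard]
    have hSnle : Sn ≤ CC * (Real.sqrt m * G) := by
      have h1 : Sn ^ 2 ≤ (CC * (Real.sqrt m * G)) ^ 2 := by
        have h2 : (CC * (Real.sqrt m * G)) ^ 2 = CC * ((m:ℝ) * G^2) * CC := by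
          rw [mul_pow, mul_pow, Real.sq_sqrt hmR.le]; ring
        rw [h2]
        calc Sn ^ 2 ≤ (∑ t ∈ (Finset.univ : Finset (Fin N)).powersetCard m,
              ‖∑ i ∈ t, v i‖ ^ 2) * CC := hCS
          _ ≤ CC * ((m:ℝ) * G^2) * CC := by
              have := hsq'
              nlinarith [hCC0]
      have h3 : 0 ≤ CC * (Real.sqrt m * G) := by positivity
      nlinarith [h1, h3, hSn0]
    set μ : ℝ := Sn / CC with hμdef
    have hμ0 : 0 ≤ μ := div_nonneg hSn0 hCC0.le
    have hμle : μ ≤ Real.sqrt m * G := by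
      rw [hμdef, div_le_iff₀ hCC0]
      linarith [hSnle]
    have hsmL : Real.sqrt ((m:ℝ) * L) = Real.sqrt m * Real.sqrt L :=
      Real.sqrt_mul (by positivity) _
    have h1L : (1:ℝ) ≤ Real.sqrt L := by
      rw [show (1:ℝ) = Real.sqrt 1 by simp]
      exact Real.sqrt_le_sqrt (by linarith)
    have hsm0 : 0 < Real.sqrt m := Real.sqrt_pos.mpr hmR
    have hD : 4*G*(Real.sqrt m * Real.sqrt L) ≤ T - μ := by
      rw [hTdef, hsmL]
      nlinarith [hμle, hGpos, hsm0, h1L]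
    have hD0 : 0 < T - μ := lt_of_lt_of_le (by positivity) hD
    set l : ℝ := (T - μ) / (8 * m * G^2) with hldef
    have hl0 : 0 < l := div_pos hD0 (by positivity)
    -- MGF bound
    have hmgf := mgf_bound v G l hG0 hG m Finset.univ 0 (by rw [hunivcard]; exact hm)
    rw [hunivcard] at hmgf
    simp only [zero_add] at hmgf
    rw [← hCC, ← hSn, ← hμdef] at hmgf
    -- Chernoff
    have hchain : ((((Finset.univ : Finset (Fin N)).powersetCard m).filter
          (fun A => T < ‖∑ i ∈ A, v i‖)).card : ℝ)
        ≤ CC * Real.exp (l * μ + m * (4 * G^2 * l^2) - l * T) := by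
      have step1 : ((((Finset.univ : Finset (Fin N)).powersetCard m).filter
            (fun A => T < ‖∑ i ∈ A, v i‖)).card : ℝ)
          ≤ ∑ A ∈ ((Finset.univ : Finset (Fin N)).powersetCard m).filter
              (fun A => T < ‖∑ i ∈ A, v i‖), Real.exp (l * ‖∑ i ∈ A, v i‖ - l * T) := by
        rw [Finset.card_eq_sum_ones, Nat.cast_sum]
        refine Finset.sum_le_sum fun A hA => ?_
        have hTA := (Finset.mem_filter.mp hA).2
        have : (0:ℝ) ≤ l * ‖∑ i ∈ A, v i‖ - l * T := by nlinarith [hl0]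
        calc ((1:ℕ):ℝ) = 1 := Nat.cast_one
          _ ≤ Real.exp (l * ‖∑ i ∈ A, v i‖ - l * T) := Real.one_le_exp this
      have step2 : ∑ A ∈ ((Finset.univ : Finset (Fin N)).powersetCard m).filter
              (fun A => T < ‖∑ i ∈ A, v i‖), Real.exp (l * ‖∑ i ∈ A, v i‖ - l * T)
          ≤ ∑ A ∈ (Finset.univ : Finset (Fin N)).powersetCard m,
              Real.exp (l * ‖∑ i ∈ A, v i‖ - l * T) :=
        Finset.sum_le_sum_of_subset_of_nonneg (Finset.filter_subset _ _)
          (fun _ _ _ => Real.exp_nonneg _)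
      have step3 : ∑ A ∈ (Finset.univ : Finset (Fin N)).powersetCard m,
              Real.exp (l * ‖∑ i ∈ A, v i‖ - l * T)
          = (∑ A ∈ (Finset.univ : Finset (Fin N)).powersetCard m,
              Real.exp (l * ‖∑ i ∈ A, v i‖)) * Real.exp (- (l * T)) := by
        rw [Finset.sum_mul]
        refine Finset.sum_congr rfl fun A _ => ?_
        rw [sub_eq_add_neg, Real.exp_add]
      have step4 : (∑ A ∈ (Finset.univ : Finset (Fin N)).powersetCard m,
              Real.exp (l * ‖∑ i ∈ A, v i‖)) * Real.exp (- (l * T))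
          ≤ (CC * Real.exp (l * μ + m * (4 * G^2 * l^2))) * Real.exp (-(l * T)) :=
        mul_le_mul_of_nonneg_right hmgf (Real.exp_nonneg _)
      have step5 : (CC * Real.exp (l * μ + m * (4 * G^2 * l^2))) * Real.exp (-(l * T))
          = CC * Real.exp (l * μ + m * (4 * G^2 * l^2) - l * T) := by
        rw [sub_eq_add_neg,
          Real.exp_add (l * μ + ↑m * (4 * G ^ 2 * l ^ 2)) (-(l * T)), mul_assoc]
      linarith [step1, step2, step3.le, step4, step5.le, step3.ge, step5.ge]
    have hexpo : l * μ + m * (4 * G^2 * l^2) - l * T ≤ -L := by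
      have hD2 : 16 * G^2 * ((m:ℝ) * L) ≤ (T - μ)^2 := by
        have h4 : (4*G*(Real.sqrt m * Real.sqrt L))^2 = 16*G^2*((m:ℝ)*L) := by
          rw [mul_pow, mul_pow, mul_pow, Real.sq_sqrt hmR.le, Real.sq_sqrt hL0.le]
          ring
        have h5 : 0 ≤ 4*G*(Real.sqrt m * Real.sqrt L) := by positivity
        nlinarith [hD, h4, h5]
      have hid : l * μ + m * (4 * G^2 * l^2) - l * T = -((T - μ)^2 / (16 * m * G^2)) := by
        rw [hldef]
        field_simp
        ring
      rw [hid, neg_le_neg_iff, le_div_iff₀ (by positivity)]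
      nlinarith [hD2]
    have hβexp : Real.exp (-L) = β := by
      rw [hLdef, one_div, Real.log_inv, neg_neg, Real.exp_log hβ0]
    calc ((((Finset.univ : Finset (Fin N)).powersetCard m).filter
          (fun A => T < ‖∑ i ∈ A, v i‖)).card : ℝ)
        ≤ CC * Real.exp (l * μ + m * (4 * G^2 * l^2) - l * T) := hchain
      _ ≤ CC * Real.exp (-L) :=
          mul_le_mul_of_nonneg_left (Real.exp_le_exp.mpr hexpo) hCC0.le
      _ = β * (((Finset.univ : Finset (Fin N)).powersetCard m).card : ℝ) := by
          rw [hβexp, hPcard]; ring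
  -- STEP 2 : fibered counting over permutations
  obtain ⟨A₀, hA₀⟩ : ((Finset.univ : Finset (Fin N)).powersetCard m).Nonempty :=
    Finset.powersetCard_nonempty.mpr (by rw [hunivcard]; exact hm)
  set c0 : ℕ := (Finset.univ.filter (fun π : Equiv.Perm (Fin N) => J.image π = A₀)).card
    with hc0
  have hfibs : ∀ A ∈ (Finset.univ : Finset (Fin N)).powersetCard m,
      (Finset.univ.filter (fun π : Equiv.Perm (Fin N) => J.image π = A)).card = c0 := by
    intro A hA
    rw [hc0]
    exact fib_const m J hJcard hA hA₀
  have hcount : (Finset.univ.filter (fun π : Equiv.Perm (Fin N) =>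
        T < ‖∑ j ∈ J, v (π j)‖)).card
      = ∑ A ∈ (Finset.univ : Finset (Fin N)).powersetCard m,
        ((Finset.univ.filter (fun π : Equiv.Perm (Fin N) =>
          T < ‖∑ j ∈ J, v (π j)‖)).filter (fun π : Equiv.Perm (Fin N) => J.image ⇑π = A)).card :=
    Finset.card_eq_sum_card_fiberwise (fun π _ => hΦmem π)
  have hsplit : ∀ A ∈ (Finset.univ : Finset (Fin N)).powersetCard m,
      ((Finset.univ.filter (fun π : Equiv.Perm (Fin N) =>
          T < ‖∑ j ∈ J, v (π j)‖)).filter (fun π : Equiv.Perm (Fin N) => J.image ⇑π = A)).card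
      = if T < ‖∑ i ∈ A, v i‖ then c0 else 0 := by
    intro A hA
    split_ifs with h
    · rw [← hfibs A hA]
      congr 1
      ext π
      simp only [Finset.mem_filter, Finset.mem_univ, true_and]
      constructor
      · rintro ⟨-, h2⟩; exact h2
      · intro h2; exact ⟨by rw [hcond π, h2]; exact h, h2⟩
    · rw [Finset.card_eq_zero]
      ext π
      simp only [Finset.mem_filter, Finset.mem_univ, true_and, Finset.notMem_empty,
        iff_false, not_and]
      intro h1 h2
      rw [hcond π, h2] at h1
      exact h h1
  have hperm : Fintype.card (Equiv.Perm (Fin N))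
      = (((Finset.univ : Finset (Fin N)).powersetCard m).card) * c0 := by
    rw [← Finset.card_univ]
    rw [Finset.card_eq_sum_card_fiberwise
      (f := fun π : Equiv.Perm (Fin N) => J.image π)
      (t := (Finset.univ : Finset (Fin N)).powersetCard m) (fun π _ => hΦmem π)]
    rw [Finset.sum_congr rfl hfibs, Finset.sum_const, smul_eq_mul]
  have hfinal : (Finset.univ.filter (fun π : Equiv.Perm (Fin N) =>
        T < ‖∑ j ∈ J, v (π j)‖)).card
      = (((Finset.univ : Finset (Fin N)).powersetCard m).filter
          (fun A => T < ‖∑ i ∈ A, v i‖)).card * c0 := by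
    rw [hcount, Finset.sum_congr rfl hsplit]
    rw [← Finset.sum_filter, Finset.sum_const, smul_eq_mul]
  rw [hfinal]
  push_cast
  rw [hperm]
  push_cast
  calc ((((Finset.univ : Finset (Fin N)).powersetCard m).filter
        (fun A => T < ‖∑ i ∈ A, v i‖)).card : ℝ) * (c0 : ℝ)
      ≤ (β * (((Finset.univ : Finset (Fin N)).powersetCard m).card : ℝ)) * (c0 : ℝ) :=
        mul_le_mul_of_nonneg_right hsubset (Nat.cast_nonneg _)
    _ = β * ((((Finset.univ : Finset (Fin N)).powersetCard m).card : ℝ) * (c0 : ℝ)) := by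
        ring
end

section
/- Let ℓ be μ-strongly convex and let x be a dataset of n users. Let θ* be the minimizer of the empirical loss L(·; x) and suppose ‖∇L(θ*; x_i)‖ ≤ γ for every user i ∈ [n], where ∇L(θ*; x_i) is the average gradient over user i's items at θ*. Then for every subset S ⊆ [n] with |S| = s ≤ n/2, the minimizer θ*_{-S} of L(·; x_{-S}) satisfies ‖θ* - θ*_{-S}‖ ≤ 2·(2sγ/(μ n)) = 4sγ/(μn); more precisely ‖∇L(θ*; x_{-S})‖ ≤ sγ/(n-s) ≤ 2sγ/n, and hence ‖θ* - θ*_{-S}‖ ≤ (2/μ)·(2sγ/n). -/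
open scoped BigOperators

open InnerProductSpace in
private lemma hasGradientAt_smul_sum {F : Type*} [NormedAddCommGroup F] [InnerProductSpace ℝ F]
    [CompleteSpace F] {ι : Type*} (t : Finset ι) (f : ι → F → ℝ) (g : ι → F) (c : ℝ) (x : F)
    (h : ∀ i ∈ t, HasGradientAt (f i) (g i) x) :
    HasGradientAt (fun θ => c * ∑ i ∈ t, f i θ) (c • ∑ i ∈ t, g i) x := by
  rw [hasGradientAt_iff_hasFDerivAt]
  have h' : HasFDerivAt (fun θ => ∑ i ∈ t, f i θ) (∑ i ∈ t, toDual ℝ F (g i)) x :=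
    HasFDerivAt.fun_sum (fun i hi => (hasGradientAt_iff_hasFDerivAt.1 (h i hi)))
  have h2 := h'.const_mul c
  exact h2.congr_fderiv (by simp [map_sum, map_smul])

open InnerProductSpace in
private lemma hasGradientAt_sub' {F : Type*} [NormedAddCommGroup F] [InnerProductSpace ℝ F]
    [CompleteSpace F] {f h : F → ℝ} {gf gh x : F}
    (hf : HasGradientAt f gf x) (hh : HasGradientAt h gh x) :
    HasGradientAt (fun θ => f θ - h θ) (gf - gh) x := by
  rw [hasGradientAt_iff_hasFDerivAt] at *
  have := hf.sub hh
  exact this.congr_fderiv (by simp)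

open InnerProductSpace in
private lemma hasGradientAt_half_norm_sq {F : Type*} [NormedAddCommGroup F]
    [InnerProductSpace ℝ F] [CompleteSpace F] (μ : ℝ) (x : F) :
    HasGradientAt (fun θ : F => μ / 2 * ‖θ‖ ^ 2) (μ • x) x := by
  rw [hasGradientAt_iff_hasFDerivAt]
  have h := ((hasStrictFDerivAt_norm_sq x).hasFDerivAt).const_mul (μ / 2)
  refine h.congr_fderiv ?_
  ext v
  simp [inner_smul_left, real_inner_comm]
  ring

/-- First-order condition for convex functions. -/
private lemma convex_grad_ineq {F : Type*} [NormedAddCommGroup F] [InnerProductSpace ℝ F]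
    [CompleteSpace F] {f : F → ℝ} {g x : F}
    (hf : ConvexOn ℝ Set.univ f) (hx : HasGradientAt f g x) (y : F) :
    f x + inner ℝ g (y - x) ≤ f y := by
  set φ : ℝ → ℝ := fun t => f (t • (y - x) + x) with hφ
  have hconv : ConvexOn ℝ Set.univ φ := by
    have := hf.comp_affineMap (AffineMap.lineMap x y : ℝ →ᵃ[ℝ] F)
    have e : φ = f ∘ AffineMap.lineMap x y := by
      ext t; simp only [hφ, Function.comp, AffineMap.lineMap_apply, vsub_eq_sub, vadd_eq_add]
    rw [e]; simpa using this
  have hc : HasDerivAt (fun t : ℝ => t • (y - x) + x) (y - x) 0 := by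
    simpa using ((hasDerivAt_id (0 : ℝ)).smul_const (y - x)).add_const x
  have hd : HasDerivAt φ (inner ℝ g (y - x)) 0 := by
    have hfd : HasFDerivAt f (InnerProductSpace.toDual ℝ F g) x :=
      (hasGradientAt_iff_hasFDerivAt.1 hx)
    have hfd' : HasFDerivAt f (InnerProductSpace.toDual ℝ F g) ((0 : ℝ) • (y - x) + x) := by
      simpa using hfd
    have := hfd'.comp_hasDerivAt 0 hc
    exact this
  have hslope := hconv.le_slope_of_hasDerivAt (Set.mem_univ (0 : ℝ)) (Set.mem_univ (1 : ℝ))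
    one_pos hd
  have : inner ℝ g (y - x) ≤ f y - f x := by
    have h1 : φ 1 = f y := by simp [hφ]
    have h0 : φ 0 = f x := by simp [hφ]
    simpa [slope_def_field, h1, h0] using hslope
  linarith

theorem stmt_8 {d : ℕ} (n : ℕ) (hn : 1 ≤ n) (μ γ : ℝ) (hμ : 0 < μ) (hγ : 0 ≤ γ)
    (Li : Fin n → EuclideanSpace ℝ (Fin d) → ℝ)
    (hdiff : ∀ i, Differentiable ℝ (Li i))
    (θs : EuclideanSpace ℝ (Fin d))
    (hgrad0 : gradient (fun θ => (n : ℝ)⁻¹ * ∑ i, Li i θ) θs = 0)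
    (hγi : ∀ i, ‖gradient (Li i) θs‖ ≤ γ)
    (S : Finset (Fin n)) (s : ℕ) (hs : S.card = s) (hs2 : 2 * s ≤ n)
    (LS : EuclideanSpace ℝ (Fin d) → ℝ)
    (hLS : LS = fun θ => ((n : ℝ) - s)⁻¹ * ∑ i ∈ Finset.univ \ S, Li i θ)
    (hLSconv : ConvexOn ℝ Set.univ (fun θ => LS θ - μ / 2 * ‖θ‖ ^ 2))
    (θS : EuclideanSpace ℝ (Fin d)) (hθS : ∀ θ, LS θS ≤ LS θ) :
    ‖gradient LS θs‖ ≤ s * γ / ((n : ℝ) - s) ∧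
    s * γ / ((n : ℝ) - s) ≤ 2 * s * γ / n ∧
    ‖θs - θS‖ ≤ (2 / μ) * (2 * s * γ / n) := by
  have hn0 : (0 : ℝ) < n := by exact_mod_cast hn
  have hsn : (s : ℝ) ≤ n / 2 := by
    have : (2 * s : ℝ) ≤ n := by exact_mod_cast hs2
    linarith
  have hns : (0 : ℝ) < (n : ℝ) - s := by linarith
  -- gradient of LS at any point
  have hgLS : ∀ θ, HasGradientAt LS
      (((n : ℝ) - s)⁻¹ • ∑ i ∈ Finset.univ \ S, gradient (Li i) θ) θ := by
    intro θ
    rw [hLS]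
    exact hasGradientAt_smul_sum _ _ _ _ _
      (fun i _ => ((hdiff i) θ).hasGradientAt)
  -- total gradient sum is zero
  have hsum0 : ∑ i, gradient (Li i) θs = 0 := by
    have h1 : HasGradientAt (fun θ => (n : ℝ)⁻¹ * ∑ i, Li i θ)
        ((n : ℝ)⁻¹ • ∑ i, gradient (Li i) θs) θs :=
      hasGradientAt_smul_sum _ _ _ _ _ (fun i _ => ((hdiff i) θs).hasGradientAt)
    have h2 := h1.gradient
    rw [hgrad0] at h2
    have hninv : ((n : ℝ)⁻¹) ≠ 0 := by positivity
    rcases smul_eq_zero.1 h2.symm with h | h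
    · exact absurd h hninv
    · exact h
  have hsdiff : ∑ i ∈ Finset.univ \ S, gradient (Li i) θs = -∑ i ∈ S, gradient (Li i) θs := by
    rw [Finset.sum_sdiff_eq_sub (Finset.subset_univ S), hsum0, zero_sub]
  have hgradLS : gradient LS θs
      = ((n : ℝ) - s)⁻¹ • ∑ i ∈ Finset.univ \ S, gradient (Li i) θs := (hgLS θs).gradient
  -- Part A
  have hA : ‖gradient LS θs‖ ≤ s * γ / ((n : ℝ) - s) := by
    rw [hgradLS, hsdiff, norm_smul, norm_neg]
    have hb : ‖∑ i ∈ S, gradient (Li i) θs‖ ≤ s * γ := by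
      calc ‖∑ i ∈ S, gradient (Li i) θs‖ ≤ ∑ i ∈ S, ‖gradient (Li i) θs‖ :=
            norm_sum_le _ _
        _ ≤ ∑ _i ∈ S, γ := Finset.sum_le_sum (fun i _ => hγi i)
        _ = s * γ := by rw [Finset.sum_const, hs]; simp [mul_comm]
    have : ‖((n : ℝ) - s)⁻¹‖ = ((n : ℝ) - s)⁻¹ := by
      rw [Real.norm_eq_abs, abs_of_pos (by positivity)]
    rw [this, div_eq_inv_mul]
    exact mul_le_mul_of_nonneg_left hb (by positivity)
  have hB : s * γ / ((n : ℝ) - s) ≤ 2 * s * γ / n := by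
    have h2 : (2 : ℝ) * s * γ / n = s * γ / (n / 2) := by
      field_simp
    rw [h2]
    apply div_le_div_of_nonneg_left (by positivity) (by linarith) (by linarith)
  refine ⟨hA, hB, ?_⟩
  -- Part C
  set g : EuclideanSpace ℝ (Fin d) → ℝ := fun θ => LS θ - μ / 2 * ‖θ‖ ^ 2 with hg
  have hLSdiff : Differentiable ℝ LS := by
    intro θ; exact ((hgLS θ).differentiableAt)
  have hgradθS : gradient LS θS = 0 := by
    have hmin : IsLocalMin LS θS := Filter.Eventually.of_forall (fun θ => hθS θ)
    have := hmin.fderiv_eq_zero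
    rw [gradient, this, map_zero]
  have hGg : ∀ θ, HasGradientAt g (gradient LS θ - μ • θ) θ := by
    intro θ
    have h1 : HasGradientAt LS (gradient LS θ) θ := (hLSdiff θ).hasGradientAt
    exact hasGradientAt_sub' h1 (hasGradientAt_half_norm_sq μ θ)
  have h1 := convex_grad_ineq hLSconv (hGg θs) θS
  have h2 := convex_grad_ineq hLSconv (hGg θS) θs
  rw [hgradθS] at h2
  have hkey : μ * ‖θs - θS‖ ^ 2 ≤ inner ℝ (gradient LS θs) (θs - θS) := by
    have hadd : inner ℝ (gradient LS θs - μ • θs) (θS - θs)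
        + inner ℝ ((0 : EuclideanSpace ℝ (Fin d)) - μ • θS) (θs - θS) ≤ (0 : ℝ) := by
      linarith
    have e1 : inner ℝ (gradient LS θs - μ • θs) (θS - θs)
        = -(inner ℝ (gradient LS θs) (θs - θS) : ℝ) - μ * inner ℝ θs (θS - θs) := by
      rw [inner_sub_left, real_inner_smul_left, ← inner_neg_right]
      simp
    have e2 : inner ℝ ((0 : EuclideanSpace ℝ (Fin d)) - μ • θS) (θs - θS)
        = -(μ * inner ℝ θS (θs - θS)) := by
      rw [zero_sub, inner_neg_left, real_inner_smul_left]
    have e3 : - inner ℝ θs (θS - θs) - inner ℝ θS (θs - θS) = (‖θs - θS‖ ^ 2 : ℝ) := by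
      have h4 : -(inner ℝ θs (θS - θs) : ℝ) = inner ℝ θs (θs - θS) := by
        rw [← inner_neg_right, neg_sub]
      rw [h4, ← inner_sub_left, real_inner_self_eq_norm_sq]
    have hi : (inner ℝ (gradient LS θs) (θs - θS) : ℝ)
        ≥ μ * (- inner ℝ θs (θS - θs) - inner ℝ θS (θs - θS)) := by
      rw [e1] at hadd; rw [e2] at hadd; linarith
    rw [e3] at hi
    linarith
  have hcs : (inner ℝ (gradient LS θs) (θs - θS) : ℝ)
      ≤ ‖gradient LS θs‖ * ‖θs - θS‖ := real_inner_le_norm _ _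
  have hGbound : ‖gradient LS θs‖ ≤ 2 * s * γ / n := le_trans hA hB
  set r := ‖θs - θS‖ with hr
  have hr0 : 0 ≤ r := norm_nonneg _
  have hK0 : (0 : ℝ) ≤ 2 * s * γ / n := by positivity
  rcases eq_or_lt_of_le hr0 with h0 | h0
  · rw [← h0]; positivity
  · have hmr : μ * r ≤ 2 * s * γ / n := by
      have : μ * r ^ 2 ≤ (2 * s * γ / n) * r := by
        calc μ * r ^ 2 ≤ inner ℝ (gradient LS θs) (θs - θS) := hkey
          _ ≤ ‖gradient LS θs‖ * r := hcs
          _ ≤ (2 * s * γ / n) * r := by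
              exact mul_le_mul_of_nonneg_right hGbound hr0
      nlinarith
    rw [div_mul_eq_mul_div, le_div_iff₀ hμ]
    calc r * μ = μ * r := mul_comm _ _
      _ ≤ 2 * s * γ / n := hmr
      _ ≤ 2 * (2 * s * γ / n) := by linarith
end
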